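/- arXiv:1010.3889 — 2 statements merged into one kernel-verified Lean document; each statement's English description precedes it below -/
import Mathlib

section
/- (Corollary 7, second part) For every integer n ≥ 1, Σ_{l=0}^{n} C(n,l)·(−1)^l·ξ_{l,q} = [2]_q + q²·ξ_{n,1/q}, where ξ_{n,1/q} denotes the q-Euler number with parameter 1/q in place of q. -/
open Finset Filter

/-- `[a]_q = (1 - q^a)/(1 - q)` for `a : ℤ`. -/
noncomputable def qnum {p : ℕ} [Fact p.Prime] (q : ℚ_[p]) (a : ℤ) : ℚ_[p] :=
  (1 - q ^ a) / (1 - q)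

/-- Kim's q-Euler polynomial `ξ_{n,q}(x)` (closed form). -/
noncomputable def xi {p : ℕ} [Fact p.Prime] (q : ℚ_[p]) (n : ℕ) (x : ℤ) : ℚ_[p] :=
  ((1 + q) / (1 - q) ^ n) *
    ∑ l ∈ Finset.range (n + 1),
      (n.choose l : ℚ_[p]) * (-1) ^ l * q ^ ((l : ℤ) * x) / (1 + q ^ (l + 1))

/-- The fermionic p-adic `r`-integral statement:
`∫_{ℤ_p} g dμ_{-r} = L` means the Riemann-type sums
`(1/[p^N]_{-r}) · Σ_{x=0}^{p^N-1} g(x) (-r)^x` converge to `L`. -/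
def fermionicIntegral (p : ℕ) [Fact p.Prime] (r : ℚ_[p]) (g : ℕ → ℚ_[p]) (L : ℚ_[p]) : Prop :=
  Filter.Tendsto
    (fun N : ℕ => ((1 + r) / (1 - (-r) ^ (p ^ N))) * ∑ x ∈ Finset.range (p ^ N), g x * (-r) ^ x)
    Filter.atTop (nhds L)

/-- The q-Bernstein polynomial `B_{k,n}(x,q) = C(n,k) [x]_q^k [1-x]_{1/q}^{n-k}`. -/
noncomputable def bern {p : ℕ} [Fact p.Prime] (q : ℚ_[p]) (k n : ℕ) (x : ℤ) : ℚ_[p] :=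
  (n.choose k : ℚ_[p]) * (qnum q x) ^ k * (qnum q⁻¹ (1 - x)) ^ (n - k)

/-!
Write `ξ_{n,q} = (1 + q) (1 - q)⁻ⁿ S_n(q)` with `S_n(q) = Σ_j C(n,j) (-1)^j / (1 + q^{j+1})`.
Since `1 / (1 + q^{-k}) = 1 - 1 / (1 + q^k)` and the alternating binomial sum vanishes,
`S_n(1/q) = -S_n(q)`, which gives `q ξ_{n,1/q} = -(-q)ⁿ ξ_{n,q}` for `n ≥ 1`.
On the other side, the two nested binomial sums in `Σ_l C(n,l) (-1)^l ξ_{l,q}` collapse to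
`Σ_j C(n,j) q^{n-j} (-1)^j / (1 + q^{j+1})`, and
`q^{n-j} / (1 + q^{j+1}) = q^{n-j} - q^{n+1} / (1 + q^{j+1})` turns this into
`(1 + q) - q (-q)ⁿ ξ_{n,q}`.
Over `ℚ_p` the denominators are nonzero because `q^{j+1} ≡ 1` and `2` is a unit for odd `p`.
-/

theorem sum_choose_mul_pow_mul_sum_choose {R : Type*} [CommRing R] (x y : R) (f : ℕ → R)
    (n : ℕ) :
    ∑ l ∈ range (n + 1), (n.choose l : R) * x ^ (n - l) *
        ∑ j ∈ range (l + 1), (l.choose j : R) * y ^ (l - j) * f j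
      = ∑ j ∈ range (n + 1), (n.choose j : R) * (x + y) ^ (n - j) * f j := by
  simp_rw [mul_sum]
  rw [sum_comm' (t' := range (n + 1)) (s' := fun j ↦ Ico j (n + 1))
    (by intro l j; simp only [mem_range, mem_Ico]; omega)]
  refine sum_congr rfl fun j hj ↦ ?_
  have hjn : j ≤ n := Nat.lt_succ_iff.mp (mem_range.mp hj)
  rw [sum_Ico_eq_sum_range, show n + 1 - j = n - j + 1 by omega, add_comm x y, add_pow,
    mul_sum, sum_mul]
  refine sum_congr rfl fun m hm ↦ ?_
  have hmn : m ≤ n - j := Nat.lt_succ_iff.mp (mem_range.mp hm)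
  have hc : (n.choose (j + m) : R) * ((j + m).choose j : R)
      = (n.choose j : R) * ((n - j).choose m : R) := by
    rw [← Nat.cast_mul, ← Nat.cast_mul, Nat.choose_mul (Nat.le_add_right j m),
      Nat.add_sub_cancel_left]
  rw [Nat.add_sub_cancel_left, show n - (j + m) = n - j - m by omega]
  linear_combination (x ^ (n - j - m) * y ^ m * f j) * hc

theorem inv_one_add_inv_add_inv_one_add {K : Type*} [Field K] {x : K} (hx : x ≠ 0)
    (h : 1 + x ≠ 0) : (1 + x⁻¹)⁻¹ + (1 + x)⁻¹ = 1 := by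
  rw [show (1 : K) + x⁻¹ = (1 + x) / x by field_simp; ring, inv_div]
  field_simp
  ring

section Ultrametric

variable {R : Type*} [SeminormedRing R] {x : R}

theorem ne_zero_of_norm_one_sub_lt_one [NormOneClass R] (hx : ‖1 - x‖ < 1) : x ≠ 0 := by
  rintro rfl
  simp at hx

theorem one_add_ne_zero_of_norm_one_sub_lt_one (h2 : ‖(2 : R)‖ = 1) (hx : ‖1 - x‖ < 1) :
    1 + x ≠ 0 := by
  intro h
  rw [eq_neg_of_add_eq_zero_right h, sub_neg_eq_add, one_add_one_eq_two, h2] at hx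
  exact hx.false

theorem norm_one_sub_pow_lt_one [NormOneClass R] [IsUltrametricDist R] (hx : ‖1 - x‖ < 1)
    (m : ℕ) : ‖1 - x ^ m‖ < 1 := by
  have hx1 : ‖x‖ ≤ 1 :=
    calc ‖x‖ = ‖1 + -(1 - x)‖ := by rw [neg_sub, add_sub_cancel]
      _ ≤ max ‖(1 : R)‖ ‖-(1 - x)‖ := IsUltrametricDist.norm_add_le_max _ _
      _ ≤ 1 := by rw [norm_neg, norm_one]; exact max_le le_rfl hx.le
  induction m with
  | zero => simp
  | succ m ih =>
    rw [show 1 - x ^ (m + 1) = (1 - x ^ m) + x ^ m * (1 - x) by noncomm_ring]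
    refine (IsUltrametricDist.norm_add_le_max _ _).trans_lt (max_lt ih ?_)
    calc ‖x ^ m * (1 - x)‖ ≤ ‖x‖ ^ m * ‖1 - x‖ :=
          (norm_mul_le _ _).trans (mul_le_mul_of_nonneg_right (norm_pow_le _ _) (norm_nonneg _))
      _ ≤ ‖1 - x‖ := mul_le_of_le_one_left (norm_nonneg _) (pow_le_one₀ (norm_nonneg _) hx1)
      _ < 1 := hx

end Ultrametric

theorem Padic.norm_two_eq_one_of_odd {p : ℕ} [Fact p.Prime] (hp : Odd p) :
    ‖(2 : ℚ_[p])‖ = 1 :=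
  mod_cast Padic.norm_natCast_eq_one_iff.mpr (Nat.coprime_two_right.mpr hp)

section xi

variable {p : ℕ} [Fact p.Prime] {q : ℚ_[p]}

theorem xi_zero_eq (q : ℚ_[p]) (n : ℕ) :
    xi q n 0 = (1 + q) / (1 - q) ^ n *
      ∑ j ∈ range (n + 1), (n.choose j : ℚ_[p]) * ((-1) ^ j / (1 + q ^ (j + 1))) := by
  simp [xi, mul_div_assoc]

theorem sum_choose_mul_neg_one_pow_div_one_add_inv_pow (hq : q ≠ 0)
    (hd : ∀ j : ℕ, 1 + q ^ (j + 1) ≠ 0) {n : ℕ} (hn : n ≠ 0) :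
    ∑ j ∈ range (n + 1), (n.choose j : ℚ_[p]) * ((-1) ^ j / (1 + q⁻¹ ^ (j + 1)))
      = -∑ j ∈ range (n + 1), (n.choose j : ℚ_[p]) * ((-1) ^ j / (1 + q ^ (j + 1))) := by
  have h_alt : ∑ j ∈ range (n + 1), (n.choose j : ℚ_[p]) * (-1) ^ j = 0 := by
    simpa [mul_comm, zero_pow hn] using (add_pow (-1 : ℚ_[p]) 1 n).symm
  rw [← sub_eq_zero, sub_neg_eq_add, ← sum_add_distrib, ← h_alt]
  refine sum_congr rfl fun j _ ↦ ?_
  rw [← mul_add, div_eq_mul_inv, div_eq_mul_inv, ← mul_add, inv_pow,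
    inv_one_add_inv_add_inv_one_add (pow_ne_zero _ hq) (hd j), mul_one]

theorem mul_xi_inv_zero (hq : q ≠ 0) (hq1 : q ≠ 1) (hd : ∀ j : ℕ, 1 + q ^ (j + 1) ≠ 0)
    {n : ℕ} (hn : n ≠ 0) : q * xi q⁻¹ n 0 = -(-q) ^ n * xi q n 0 := by
  have h1 : (1 : ℚ_[p]) - q ≠ 0 := sub_ne_zero.mpr hq1.symm
  have hpre : q * ((1 + q⁻¹) / (1 - q⁻¹) ^ n) = (-q) ^ n * ((1 + q) / (1 - q) ^ n) := by
    rw [show (1 : ℚ_[p]) - q⁻¹ = (1 - q) / -q by field_simp; ring,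
      show (1 : ℚ_[p]) + q⁻¹ = (1 + q) / q by field_simp; ring, div_pow]
    field_simp
  rw [xi_zero_eq, xi_zero_eq, sum_choose_mul_neg_one_pow_div_one_add_inv_pow hq hd hn,
    ← mul_assoc, hpre]
  ring

theorem sum_choose_pow_mul_neg_one_pow_div_one_add_pow (hd : ∀ j : ℕ, 1 + q ^ (j + 1) ≠ 0)
    (n : ℕ) :
    ∑ j ∈ range (n + 1), (n.choose j : ℚ_[p]) * q ^ (n - j) * ((-1) ^ j / (1 + q ^ (j + 1)))
      = (q - 1) ^ n
        - q ^ (n + 1) *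
          ∑ j ∈ range (n + 1), (n.choose j : ℚ_[p]) * ((-1) ^ j / (1 + q ^ (j + 1))) := by
  rw [show q - 1 = -1 + q by ring, add_pow, mul_sum, ← sum_sub_distrib]
  refine sum_congr rfl fun j hj ↦ ?_
  have hpow : q ^ (n - j) * q ^ (j + 1) = q ^ (n + 1) := by
    rw [← pow_add, ← add_assoc, Nat.sub_add_cancel (Nat.lt_succ_iff.mp (mem_range.mp hj))]
  have := hd j
  rw [← hpow]
  field_simp
  ring

theorem sum_choose_mul_neg_one_pow_mul_xi_zero (hq1 : q ≠ 1)
    (hd : ∀ j : ℕ, 1 + q ^ (j + 1) ≠ 0) (n : ℕ) :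
    ∑ l ∈ range (n + 1), (n.choose l : ℚ_[p]) * (-1) ^ l * xi q l 0
      = (1 + q) - q * (-q) ^ n * xi q n 0 := by
  have h1 : (1 : ℚ_[p]) - q ≠ 0 := sub_ne_zero.mpr hq1.symm
  have hflip (k : ℕ) : (1 - q) ^ k = (-1) ^ k * (q - 1) ^ k := by
    rw [← mul_pow, neg_one_mul, neg_sub]
  set c : ℕ → ℚ_[p] := fun j ↦ (-1) ^ j / (1 + q ^ (j + 1))
  have hterm : ∀ l ∈ range (n + 1), (n.choose l : ℚ_[p]) * (-1) ^ l * xi q l 0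
      = (-1) ^ n * (1 + q) / (1 - q) ^ n *
        ((n.choose l : ℚ_[p]) * (q - 1) ^ (n - l) *
          ∑ j ∈ range (l + 1), (l.choose j : ℚ_[p]) * c j) := by
    intro l hl
    obtain ⟨k, rfl⟩ : ∃ k, n = l + k := ⟨n - l, by have := mem_range.mp hl; omega⟩
    rw [xi_zero_eq, Nat.add_sub_cancel_left, pow_add (1 - q), hflip k]
    simp only [c]
    field_simp
    ring
  have htransform := sum_choose_mul_pow_mul_sum_choose (q - 1) 1 c n
  simp only [one_pow, mul_one, sub_add_cancel] at htransform
  rw [sum_congr rfl hterm, ← mul_sum, htransform,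
    sum_choose_pow_mul_neg_one_pow_div_one_add_pow hd, xi_zero_eq, hflip n]
  field_simp
  ring

end xi

theorem stmt10 (p : ℕ) [Fact p.Prime] (hp : Odd p) (q : ℚ_[p]) (hq : ‖1 - q‖ < 1) (hq1 : q ≠ 1) (n : ℕ) (hn : 1 ≤ n) :
    ∑ l ∈ Finset.range (n + 1), (n.choose l : ℚ_[p]) * (-1) ^ l * xi q l 0
      = (1 + q) + q ^ 2 * xi q⁻¹ n 0 := by
  have hd (j : ℕ) : 1 + q ^ (j + 1) ≠ 0 :=
    one_add_ne_zero_of_norm_one_sub_lt_one (Padic.norm_two_eq_one_of_odd hp)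
      (norm_one_sub_pow_lt_one hq _)
  rw [sum_choose_mul_neg_one_pow_mul_xi_zero hq1 hd, sq, mul_assoc q q,
    mul_xi_inv_zero (ne_zero_of_norm_one_sub_lt_one hq) hq1 hd (by omega)]
  ring
end

section
/- (Equation (21)) For all m, n, k ∈ ℕ with k ≤ n and k ≤ m, the fermionic p-adic q-integral of x ↦ B_{k,n}(x,q)·B_{k,m}(x,q) exists and ∫_{ℤ_p} B_{k,n}(x,q)·B_{k,m}(x,q) dμ_{−q}(x) = C(n,k)·C(m,k)·Σ_{l=0}^{2k} C(2k,l)·(−1)^{l+2k}·ξ_{n+m−l,1/q}(2), where ξ_{j,1/q} denotes the q-Euler polynomial with parameter 1/q in place of q. -/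
/-!
Since `[x]_q = 1 - [1 - x]_{1/q}`, the product `B_{k,n} B_{k,m}` is a binomial combination of the
powers `[1 - x]_{1/q}^j`, and each of these is a combination of geometric functions
`x ↦ (q^i)^x`. For those the Riemann sums telescope, `p^N` being odd, to
`(1 + q)(1 + (q^{i+1})^{p^N}) / ((1 + q^{i+1})(1 + q^{p^N}))`, and `a^{p^N} → 1` whenever
`|a - 1|_p < 1`; hence `∫ (q^i)^x dμ_{-q} = (1 + q)/(1 + q^{i+1})`, and reassembling the
coefficients gives `ξ_{j,1/q}(2)`.
-/

open Finset Filter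

section Ultrametric

variable {K : Type*} [NormedField K] [IsUltrametricDist K]

lemma norm_eq_one_of_norm_sub_one_lt_one {a : K} (ha : ‖a - 1‖ < 1) : ‖a‖ = 1 := by
  have h : ‖(a - 1) + 1‖ = max ‖a - 1‖ ‖(1 : K)‖ :=
    IsUltrametricDist.norm_add_eq_max_of_norm_ne_norm (by rw [norm_one]; exact ha.ne)
  rwa [sub_add_cancel, norm_one, max_eq_right ha.le] at h

lemma norm_one_add_eq_one {a : K} (h2 : ‖(2 : K)‖ = 1) (ha : ‖a - 1‖ < 1) : ‖1 + a‖ = 1 := by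
  have h : ‖2 + (a - 1)‖ = max ‖(2 : K)‖ ‖a - 1‖ :=
    IsUltrametricDist.norm_add_eq_max_of_norm_ne_norm (by rw [h2]; exact ha.ne')
  rwa [show (2 : K) + (a - 1) = 1 + a by ring, h2, max_eq_left ha.le] at h

lemma norm_geom_sum_le_one {a : K} (ha : ‖a‖ ≤ 1) (n : ℕ) : ‖∑ i ∈ range n, a ^ i‖ ≤ 1 :=
  IsUltrametricDist.norm_sum_le_of_forall_le_of_nonneg zero_le_one fun i _ ↦ by
    rw [norm_pow]; exact pow_le_one₀ (norm_nonneg a) ha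

lemma norm_pow_sub_one_le {a : K} (ha : ‖a‖ ≤ 1) (n : ℕ) : ‖a ^ n - 1‖ ≤ ‖a - 1‖ := by
  rw [← geom_sum_mul, norm_mul]
  exact mul_le_of_le_one_left (norm_nonneg _) (norm_geom_sum_le_one ha n)

/-- `a ^ n - 1 = (a - 1) (n + ∑ (a ^ i - 1))`, and the second factor is `≤ max ‖n‖ ‖a - 1‖`. -/
lemma norm_pow_sub_one_le_max_mul {a : K} (ha : ‖a‖ ≤ 1) (n : ℕ) :
    ‖a ^ n - 1‖ ≤ max ‖(n : K)‖ ‖a - 1‖ * ‖a - 1‖ := by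
  have hsum : ∑ i ∈ range n, a ^ i = n + ∑ i ∈ range n, (a ^ i - 1) := by
    simp [sum_sub_distrib]
  have hle : ‖∑ i ∈ range n, (a ^ i - 1)‖ ≤ ‖a - 1‖ :=
    IsUltrametricDist.norm_sum_le_of_forall_le_of_nonneg (norm_nonneg _)
      fun i _ ↦ norm_pow_sub_one_le ha i
  rw [← geom_sum_mul, norm_mul, hsum]
  gcongr
  exact (IsUltrametricDist.norm_add_le_max _ _).trans (max_le_max le_rfl hle)

lemma tendsto_pow_pow_nhds_one {p : ℕ} (hp : ‖(p : K)‖ < 1) {a : K} (ha : ‖a - 1‖ < 1) :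
    Tendsto (fun N : ℕ ↦ a ^ p ^ N) atTop (nhds 1) := by
  set c := max ‖(p : K)‖ ‖a - 1‖
  have hc0 : 0 ≤ c := (norm_nonneg _).trans (le_max_left _ _)
  have hc1 : c < 1 := max_lt hp ha
  have ha1 : ‖a‖ ≤ 1 := (norm_eq_one_of_norm_sub_one_lt_one ha).le
  have hbound : ∀ N : ℕ, ‖a ^ p ^ N - 1‖ ≤ c ^ N * ‖a - 1‖ := by
    intro N
    induction N with
    | zero => simp
    | succ N ih =>
      have haN : ‖a ^ p ^ N‖ ≤ 1 := by rw [norm_pow]; exact pow_le_one₀ (norm_nonneg a) ha1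
      calc ‖a ^ p ^ (N + 1) - 1‖
          ≤ max ‖(p : K)‖ ‖a ^ p ^ N - 1‖ * ‖a ^ p ^ N - 1‖ := by
            rw [pow_succ, pow_mul]; exact norm_pow_sub_one_le_max_mul haN p
        _ ≤ c * (c ^ N * ‖a - 1‖) := by
            gcongr
            exact max_le_max le_rfl (norm_pow_sub_one_le ha1 _)
        _ = c ^ (N + 1) * ‖a - 1‖ := by ring
  rw [tendsto_iff_norm_sub_tendsto_zero]
  refine squeeze_zero (fun _ ↦ norm_nonneg _) hbound ?_
  simpa using (tendsto_pow_atTop_nhds_zero_of_lt_one hc0 hc1).mul_const ‖a - 1‖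

end Ultrametric

section FermionicIntegral

variable {p : ℕ} [Fact p.Prime]

lemma Padic.norm_two_eq_one (hp : Odd p) : ‖(2 : ℚ_[p])‖ = 1 := by
  exact_mod_cast Padic.norm_natCast_eq_one_iff.mpr (Nat.coprime_two_right.mpr hp)

lemma fermionicIntegral_sum {r : ℚ_[p]} {ι : Type*} (s : Finset ι) {g : ι → ℕ → ℚ_[p]}
    {L : ι → ℚ_[p]} (h : ∀ i ∈ s, fermionicIntegral p r (g i) (L i)) :
    fermionicIntegral p r (fun x ↦ ∑ i ∈ s, g i x) (∑ i ∈ s, L i) := by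
  refine (tendsto_finsetSum s h).congr fun N ↦ ?_
  simp only [sum_mul, mul_sum]
  exact sum_comm

lemma fermionicIntegral_const_mul {r : ℚ_[p]} (c : ℚ_[p]) {g : ℕ → ℚ_[p]} {L : ℚ_[p]}
    (h : fermionicIntegral p r g L) :
    fermionicIntegral p r (fun x ↦ c * g x) (c * L) := by
  refine (h.const_mul c).congr fun N ↦ ?_
  simp only [mul_sum, mul_assoc, mul_left_comm c]

lemma fermionicIntegral_pow (hp : Odd p) {r a : ℚ_[p]} (hr : ‖r - 1‖ < 1) (ha : ‖a - 1‖ < 1) :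
    fermionicIntegral p r (fun x ↦ a ^ x) ((1 + r) / (1 + a * r)) := by
  have h2 := Padic.norm_two_eq_one hp
  have har : ‖a * r - 1‖ < 1 := by
    rw [show a * r - 1 = a * (r - 1) + (a - 1) by ring]
    refine (IsUltrametricDist.norm_add_le_max _ _).trans_lt (max_lt ?_ ha)
    rwa [norm_mul, norm_eq_one_of_norm_sub_one_lt_one ha, one_mul]
  have har0 : 1 + a * r ≠ 0 := norm_ne_zero_iff.mp (by rw [norm_one_add_eq_one h2 har]; simp)
  have hsum (N : ℕ) : ((1 + r) / (1 - (-r) ^ p ^ N)) * ∑ x ∈ range (p ^ N), a ^ x * (-r) ^ x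
      = (1 + r) / (1 + a * r) * ((1 + (a * r) ^ p ^ N) / (1 + r ^ p ^ N)) := by
    have hodd : Odd (p ^ N) := hp.pow
    have hgeom := mul_neg_geom_sum (-(a * r)) (p ^ N)
    rw [sub_neg_eq_add, hodd.neg_pow, sub_neg_eq_add] at hgeom
    simp only [← mul_pow, mul_neg, hodd.neg_pow, sub_neg_eq_add]
    rw [← hgeom, mul_div_assoc, ← mul_assoc, div_mul_cancel₀ _ har0]
    ring
  have hlim : Tendsto (fun N : ℕ ↦ (1 + (a * r) ^ p ^ N) / (1 + r ^ p ^ N)) atTop (nhds 1) := by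
    have hp1 : ‖(p : ℚ_[p])‖ < 1 := Padic.norm_p_lt_one
    have h := ((tendsto_pow_pow_nhds_one hp1 har).const_add 1).div
      ((tendsto_pow_pow_nhds_one hp1 hr).const_add 1) (by norm_num)
    rwa [div_self (by norm_num)] at h
  unfold fermionicIntegral
  simpa [hsum] using hlim.const_mul ((1 + r) / (1 + a * r))

end FermionicIntegral

lemma one_sub_pow_mul_pow_eq_sum {R : Type*} [CommRing R] (F : R) (r s : ℕ) :
    (1 - F) ^ s * F ^ r
      = ∑ l ∈ range (s + 1), (s.choose l : R) * (-1) ^ (l + s) * F ^ (r + s - l) := by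
  rw [sub_eq_add_neg, add_pow, sum_mul]
  refine sum_congr rfl fun l hl ↦ ?_
  have hls : l ≤ s := Nat.lt_succ_iff.mp (mem_range.mp hl)
  rw [neg_pow, show l + s = (s - l) + 2 * l by omega, pow_add _ (s - l), pow_mul, neg_one_sq,
    show r + s - l = (s - l) + r by omega, pow_add F (s - l)]
  ring

section QAnalogue

variable {p : ℕ} [Fact p.Prime] {q : ℚ_[p]}

lemma qnum_add_qnum_inv_one_sub (hq0 : q ≠ 0) (hq1 : q ≠ 1) (x : ℤ) :
    qnum q x + qnum q⁻¹ (1 - x) = 1 := by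
  have h1 : 1 - q ≠ 0 := sub_ne_zero.mpr hq1.symm
  have h2 : 1 - q⁻¹ ≠ 0 := sub_ne_zero.mpr (by simpa [eq_comm] using hq1)
  unfold qnum
  rw [inv_zpow', neg_sub, zpow_sub₀ hq0, zpow_one]
  field_simp
  ring

lemma qnum_inv_one_sub_natCast (hq0 : q ≠ 0) (x : ℕ) :
    qnum q⁻¹ (1 - x) = (1 - q⁻¹ * q ^ x) / (1 - q⁻¹) := by
  rw [qnum, zpow_sub₀ (inv_ne_zero hq0), zpow_one, zpow_natCast, inv_pow, div_inv_eq_mul]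

lemma qnum_inv_one_sub_pow_eq_sum (hq0 : q ≠ 0) (j x : ℕ) :
    qnum q⁻¹ (1 - x) ^ j
      = ∑ i ∈ range (j + 1), (j.choose i : ℚ_[p]) * (-q⁻¹) ^ i / (1 - q⁻¹) ^ j * (q ^ i) ^ x := by
  rw [qnum_inv_one_sub_natCast hq0, div_pow, sub_eq_add_neg, add_comm, add_pow, sum_div]
  refine sum_congr rfl fun i _ ↦ ?_
  rw [one_pow, mul_one, ← pow_mul, mul_comm i, pow_mul, neg_mul_eq_neg_mul, mul_pow]
  ring

lemma xi_inv_two_eq_sum (hq0 : q ≠ 0) (j : ℕ) :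
    xi q⁻¹ j 2 = ∑ i ∈ range (j + 1),
      (j.choose i : ℚ_[p]) * (-q⁻¹) ^ i / (1 - q⁻¹) ^ j * ((1 + q) / (1 + q ^ i * q)) := by
  rw [xi, mul_sum]
  refine sum_congr rfl fun i _ ↦ ?_
  have hu : q⁻¹ ^ (i + 1) ≠ 0 := pow_ne_zero _ (inv_ne_zero hq0)
  have hden : 1 + q⁻¹ ^ (i + 1) = (1 + q ^ i * q) * q⁻¹ ^ (i + 1) := by
    simp only [inv_pow]
    field_simp
    ring
  have hnum : (1 + q⁻¹) * q⁻¹ ^ (2 * i) = q⁻¹ ^ i * (1 + q) * q⁻¹ ^ (i + 1) := by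
    simp only [inv_pow]
    field_simp
    ring
  calc (1 + q⁻¹) / (1 - q⁻¹) ^ j
        * ((j.choose i : ℚ_[p]) * (-1) ^ i * q⁻¹ ^ ((i : ℤ) * 2) / (1 + q⁻¹ ^ (i + 1)))
      = (j.choose i : ℚ_[p]) * (-1) ^ i / (1 - q⁻¹) ^ j
          * ((1 + q⁻¹) * q⁻¹ ^ (2 * i) / (1 + q⁻¹ ^ (i + 1))) := by
        rw [show (i : ℤ) * 2 = (2 * i : ℕ) by push_cast; ring, zpow_natCast]
        ring
    _ = _ := by
        rw [hnum, hden, mul_div_mul_right _ _ hu, neg_pow q⁻¹]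
        ring

lemma fermionicIntegral_qnum_inv_one_sub_pow (hp : Odd p) (hq : ‖1 - q‖ < 1) (j : ℕ) :
    fermionicIntegral p q (fun x ↦ qnum q⁻¹ (1 - x) ^ j) (xi q⁻¹ j 2) := by
  have hq0 : q ≠ 0 := by rintro rfl; simp at hq
  have hq' : ‖q - 1‖ < 1 := by rwa [norm_sub_rev]
  have hq_norm : ‖q‖ = 1 := norm_eq_one_of_norm_sub_one_lt_one hq'
  simp_rw [qnum_inv_one_sub_pow_eq_sum hq0, xi_inv_two_eq_sum hq0]
  exact fermionicIntegral_sum _ fun i _ ↦ fermionicIntegral_const_mul _ <|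
    fermionicIntegral_pow hp hq' ((norm_pow_sub_one_le hq_norm.le i).trans_lt hq')

lemma bern_mul_bern (hq0 : q ≠ 0) (hq1 : q ≠ 1) {m n k : ℕ} (hkn : k ≤ n) (hkm : k ≤ m) (x : ℤ) :
    bern q k n x * bern q k m x
      = (n.choose k : ℚ_[p]) * (m.choose k : ℚ_[p]) * ∑ l ∈ range (2 * k + 1),
          ((2 * k).choose l : ℚ_[p]) * (-1) ^ (l + 2 * k) * qnum q⁻¹ (1 - x) ^ (n + m - l) := by
  have hexpand := one_sub_pow_mul_pow_eq_sum (qnum q⁻¹ (1 - x)) (n - k + (m - k)) (2 * k)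
  rw [show n - k + (m - k) + 2 * k = n + m by omega] at hexpand
  rw [bern, bern, eq_sub_of_add_eq (qnum_add_qnum_inv_one_sub hq0 hq1 x), ← hexpand]
  ring

end QAnalogue

theorem stmt14 (p : ℕ) [Fact p.Prime] (hp : Odd p) (q : ℚ_[p]) (hq : ‖1 - q‖ < 1) (hq1 : q ≠ 1) (m n k : ℕ) (hkn : k ≤ n) (hkm : k ≤ m) :
    fermionicIntegral p q (fun x => bern q k n x * bern q k m x)
      ((n.choose k : ℚ_[p]) * (m.choose k : ℚ_[p]) *
        ∑ l ∈ Finset.range (2 * k + 1),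
          ((2 * k).choose l : ℚ_[p]) * (-1) ^ (l + 2 * k) * xi q⁻¹ (n + m - l) 2) := by
  have hq0 : q ≠ 0 := by rintro rfl; simp at hq
  simp_rw [bern_mul_bern hq0 hq1 hkn hkm]
  exact fermionicIntegral_const_mul _ <| fermionicIntegral_sum _ fun l _ ↦
    fermionicIntegral_const_mul _ (fermionicIntegral_qnum_inv_one_sub_pow hp hq _)
end
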